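/- For every Dyck word x of length 2k with π(x) = (a_1,...,a_{2k}), the bit of x at position a_i is 0 when i is odd and 1 when i is even. -/

import Mathlib

/-- `x ∈ B_k`: bitstring of length `2k` with weight `k` or `k+1`. -/
def inB (k : ℕ) (x : List Bool) : Prop :=
  x.length = 2*k ∧ (x.count true = k ∨ x.count true = k+1)

/-- Dyck word: equally many 1s and 0s, every prefix has at least as many 1s as 0s. -/
def isDyck (x : List Bool) : Prop :=
  x.count true = x.count false ∧ ∀ n, (x.take n).count false ≤ (x.take n).count true

/-- Complement of the reverse. -/
def mirror (x : List Bool) : List Bool := x.reverse.map (fun b => !b)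

/-- Bitwise complement. -/
def compl (x : List Bool) : List Bool := x.map (fun b => !b)

/-- Specification of the recursively defined bit-flip sequence `π`. -/
def IsPiFun (π : List Bool → List ℕ) : Prop :=
  π [] = [] ∧ ∀ u v : List Bool, isDyck u → isDyck v →
    π (true :: u ++ false :: v) =
      (u.length + 2) :: ((π (mirror u)).map (fun a => u.length + 2 - a))
        ++ 1 :: ((π v).map (fun a => u.length + 2 + a))

/-- Flip the bit at (1-indexed) position `a`. -/
def flipBit (y : List Bool) (a : ℕ) : List Bool := y.set (a-1) (!(y.getD (a-1) false))

/-- The path `P(x)`, as the list of vertices obtained by flipping bits in order `π x`. -/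
def pathOf (π : List Bool → List ℕ) (x : List Bool) : List (List Bool) :=
  List.scanl flipBit x (π x)

/-- Adjacency in `G_k`: both vertices in `B_k`, differing in exactly one position. -/
def GkAdj (k : ℕ) (x y : List Bool) : Prop :=
  inB k x ∧ inB k y ∧ (List.range (2*k)).countP (fun i => x.getD i false != y.getD i false) = 1

/-- Adjacency in `G_k^+`: a `G_k` edge or a complement edge. -/
def GkPlusAdj (k : ℕ) (x y : List Bool) : Prop :=
  GkAdj k x y ∨ (inB k x ∧ inB k y ∧ (y = compl x ∨ x = compl y))

/-
Write a nonempty Dyck word as `x = 1u0v` with `u`, `v` Dyck words (first-return decomposition).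
The recursion for `π x` visits, in order: the `0` at position `|u| + 2`, the positions of
`π (mirror u)` reflected by `a ↦ |u| + 2 - a` into the block `u` (reflection composed with
complementation turns the alternating reading `0101…` of `mirror u` into `1010…`), the `1` at
position `1`, and the positions of `π v` shifted into the block `v`. Since `|u|` is even, the bits
read concatenate to the alternating word `0101…` of length `|x|`, by induction along the
decomposition.
-/

open DyckStep

def dyckStepEquivBool : DyckStep ≃ Bool where
  toFun s := s = U
  invFun b := if b then U else D
  left_inv s := by cases s <;> rfl
  right_inv b := by cases b <;> rfl

@[simp] lemma dyckStepEquivBool_U : dyckStepEquivBool U = true := rfl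

@[simp] lemma dyckStepEquivBool_D : dyckStepEquivBool D = false := rfl

lemma isDyck_iff_exists_dyckWord {x : List Bool} :
    isDyck x ↔ ∃ p : DyckWord, p.toList.map dyckStepEquivBool = x := by
  have hU (l : List DyckStep) : (l.map dyckStepEquivBool).count true = l.count U :=
    List.count_map_of_injective l _ dyckStepEquivBool.injective U
  have hD (l : List DyckStep) : (l.map dyckStepEquivBool).count false = l.count D :=
    List.count_map_of_injective l _ dyckStepEquivBool.injective D
  constructor
  · intro hx
    have hx' : x = (x.map dyckStepEquivBool.symm).map dyckStepEquivBool := by simp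
    rw [hx'] at hx
    refine ⟨⟨x.map dyckStepEquivBool.symm, ?_, fun i => ?_⟩, hx'.symm⟩
    · simpa only [hU, hD] using hx.1
    · simpa only [← List.map_take, hU, hD] using hx.2 i
  · rintro ⟨p, rfl⟩
    refine ⟨?_, fun i => ?_⟩
    · rw [hU, hD, p.count_U_eq_count_D]
    · rw [← List.map_take, hU, hD]
      exact p.count_D_le_count_U i

lemma isDyck.exists_eq_cons_append {x : List Bool} (hx : isDyck x) (hne : x ≠ []) :
    ∃ u v, isDyck u ∧ isDyck v ∧ x = true :: u ++ false :: v := by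
  obtain ⟨p, rfl⟩ := isDyck_iff_exists_dyckWord.mp hx
  have hp : p ≠ 0 := by rintro rfl; exact hne rfl
  refine ⟨_, _, isDyck_iff_exists_dyckWord.mpr ⟨p.insidePart, rfl⟩,
    isDyck_iff_exists_dyckWord.mpr ⟨p.outsidePart, rfl⟩, ?_⟩
  conv_lhs => rw [← DyckWord.nest_insidePart_add_outsidePart hp]
  change List.map _ ([U] ++ p.insidePart.toList ++ [D] ++ p.outsidePart.toList) = _
  simp

@[simp] lemma length_mirror (u : List Bool) : (mirror u).length = u.length := by
  simp [mirror]

lemma count_mirror (b : Bool) (u : List Bool) : (mirror u).count b = u.count (!b) := by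
  conv_lhs => rw [← Bool.not_not b]
  rw [mirror, List.count_map_of_injective _ _ Bool.not_injective, List.count_reverse]

lemma isDyck_mirror {u : List Bool} (hu : isDyck u) : isDyck (mirror u) := by
  refine ⟨by simp [count_mirror, hu.1], fun m => ?_⟩
  have htake : (mirror u).take m = mirror (u.drop (u.length - m)) := by
    rw [mirror, ← List.map_take, List.take_reverse, mirror]
  have hbalanced := hu.1
  have hprefix := hu.2 (u.length - m)
  have hsplit (b : Bool) :
      (u.take (u.length - m)).count b + (u.drop (u.length - m)).count b = u.count b := by
    rw [← List.count_append, List.take_append_drop]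
  have := hsplit true
  have := hsplit false
  rw [htake, count_mirror, count_mirror]
  simp only [Bool.not_false, Bool.not_true]
  omega

lemma isDyck.even_length {x : List Bool} (hx : isDyck x) : Even x.length := by
  rw [← List.count_true_add_count_false, hx.1]
  exact ⟨_, rfl⟩

@[elab_as_elim]
theorem isDyck.induction_mirror {P : List Bool → Prop} (nil : P [])
    (cons : ∀ u v, isDyck u → isDyck v → P (mirror u) → P v → P (true :: u ++ false :: v))
    {x : List Bool} (hx : isDyck x) : P x := by
  induction h : x.length using Nat.strong_induction_on generalizing x with
  | _ n ih =>
    rcases eq_or_ne x [] with rfl | hne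
    · exact nil
    obtain ⟨u, v, hu, hv, rfl⟩ := hx.exists_eq_cons_append hne
    simp only [List.length_cons, List.length_append] at h
    exact cons u v hu hv (ih _ (by simp; omega) (isDyck_mirror hu) rfl) (ih _ (by omega) hv rfl)

def alternatingBits (n : ℕ) : List Bool := (List.range n).map fun i => decide (i % 2 = 1)

lemma alternatingBits_succ_eq_cons (n : ℕ) :
    alternatingBits (n + 1) = false :: (alternatingBits n).map not := by
  simp only [alternatingBits, List.range_succ_eq_map, List.map_cons, List.map_map]
  congr 2
  funext i
  by_cases h : i % 2 = 1 <;> simp [h] <;> omega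

lemma alternatingBits_succ (n : ℕ) :
    alternatingBits (n + 1) = alternatingBits n ++ [decide (n % 2 = 1)] := by
  simp [alternatingBits, List.range_succ]

lemma alternatingBits_add_of_even {m : ℕ} (hm : Even m) (n : ℕ) :
    alternatingBits (m + n) = alternatingBits m ++ alternatingBits n := by
  obtain ⟨r, rfl⟩ := hm
  simp only [alternatingBits, List.range_add, List.map_append, List.map_map]
  congr 2
  funext i
  simp
  omega

def bitsAt (x : List Bool) (p : List ℕ) : List Bool := p.map fun a => x.getD (a - 1) false

section cons_append_cons

variable {b c : Bool} {u v : List Bool} {a : ℕ}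

lemma getD_cons_append_cons_mirror (ha : a ∈ Set.Icc 1 u.length) :
    (b :: u ++ c :: v).getD (u.length + 2 - a - 1) false =
      !(mirror u).getD (a - 1) false := by
  obtain ⟨h1, h2⟩ := ha
  have hidx : u.length - 1 - (a - 1) = u.length - a := by omega
  rw [show u.length + 2 - a - 1 = (u.length - a) + 1 by omega]
  have hlt : u.length - a < u.length := by omega
  simp [List.getD_eq_getElem?_getD, mirror, List.getElem?_append_left hlt,
    List.getElem?_reverse (show a - 1 < (u.map _).length by simp; omega), hidx,
    List.getElem?_eq_getElem hlt]

lemma getD_cons_append_cons_right (ha : 1 ≤ a) :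
    (b :: u ++ c :: v).getD (u.length + 2 + a - 1) false = v.getD (a - 1) false := by
  obtain ⟨a, rfl⟩ : ∃ a', a = a' + 1 := ⟨a - 1, by omega⟩
  rw [show u.length + 2 + (a + 1) - 1 = (u.length + (a + 1)) + 1 by omega]
  simp [List.getD_eq_getElem?_getD, List.getElem?_append_right]

end cons_append_cons

namespace IsPiFun

variable {π : List Bool → List ℕ} (hπ : IsPiFun π)
include hπ

lemma forall_mem_Icc {x : List Bool} (hx : isDyck x) :
    ∀ a ∈ π x, a ∈ Set.Icc 1 x.length := by
  refine isDyck.induction_mirror ?_ (fun u v hu hv ihu ihv => ?_) hx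
  · simp [hπ.1]
  rw [hπ.2 u v hu hv]
  simp only [length_mirror, Set.mem_Icc] at ihu ihv
  simp only [List.mem_cons, List.mem_append, List.mem_map, Set.mem_Icc, List.length_cons,
    List.length_append]
  rintro a ((rfl | ⟨b, hb, rfl⟩) | (rfl | ⟨b, hb, rfl⟩))
  · omega
  · have := ihu b hb
    omega
  · omega
  · have := ihv b hb
    omega

lemma bitsAt_eq {x : List Bool} (hx : isDyck x) : bitsAt x (π x) = alternatingBits x.length := by
  refine isDyck.induction_mirror ?_ (fun u v hu hv ihu ihv => ?_) hx
  · simp [hπ.1, bitsAt, alternatingBits]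
  set w := true :: u ++ false :: v
  have hmirror : (π (mirror u)).map (fun a => w.getD (u.length + 2 - a - 1) false) =
      (alternatingBits u.length).map not := by
    rw [length_mirror] at ihu
    rw [← ihu, bitsAt, List.map_map]
    exact List.map_congr_left fun a ha =>
      getD_cons_append_cons_mirror (by simpa using hπ.forall_mem_Icc (isDyck_mirror hu) a ha)
  have hright : (π v).map (fun a => w.getD (u.length + 2 + a - 1) false) =
      alternatingBits v.length := by
    rw [← ihv, bitsAt]
    exact List.map_congr_left fun a ha => getD_cons_append_cons_right (hπ.forall_mem_Icc hv a ha).1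
  obtain ⟨r, hr⟩ := hu.even_length
  have hlen : w.length = (u.length + 2) + v.length := by simp [w]; omega
  rw [hπ.2 u v hu hv]
  simp only [bitsAt, List.map_cons, List.map_append, List.map_map, Function.comp_def]
  rw [hmirror, hright, hlen, alternatingBits_add_of_even ⟨r + 1, by omega⟩,
    alternatingBits_succ, alternatingBits_succ_eq_cons, decide_eq_true (by omega)]
  simp [w, show u.length + 2 - 1 = u.length + 1 by omega]

end IsPiFun

theorem stmt_5_general (π : List Bool → List ℕ) (hπ : IsPiFun π) (x : List Bool)
    (hx : isDyck x) :
    ∀ (i : ℕ) (hi : i < (π x).length),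
      x.getD ((π x).get ⟨i, hi⟩ - 1) false = (if i % 2 = 0 then false else true) := by
  intro i hi
  have h := List.getElem_of_eq (hπ.bitsAt_eq hx) (by simpa [bitsAt] using hi)
  simp only [bitsAt, alternatingBits, List.getElem_map, List.getElem_range] at h
  rw [List.get_eq_getElem, h]
  split <;> simp <;> omega

theorem stmt_5 (π : List Bool → List ℕ) (hπ : IsPiFun π) (k : ℕ) (x : List Bool)
    (hx : isDyck x) (hl : x.length = 2*k) :
    ∀ (i : ℕ) (hi : i < (π x).length),
      x.getD ((π x).get ⟨i, hi⟩ - 1) false = (if i % 2 = 0 then false else true) :=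
  stmt_5_general π hπ x hx
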